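/- arXiv:2602.17014 — 6 statements merged into one kernel-verified Lean document; each statement's English description precedes it below -/
import Mathlib

section
/- Let c1, c2 : ℝ → ℝ be smooth (C^∞) functions with c1(x) < c2(x) for all x ∈ ℝ, and let m ≥ 2 be an integer. Define F : ℝ^{m+1} → ℝ by F(x1, x2, y1, …, y_{m-1}) = (x1 - c1(x2))·(c2(x2) - x1) - Σ_{j=1}^{m-1} y_j². Then 0 is a regular value of F restricted to the set X = F⁻¹(0) ∩ {(x1,x2,y) : c1(x2) ≤ x1 ≤ c2(x2)}; more precisely, at every point of X the gradient of F is nonzero. -/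
theorem stmt_0 (m : ℕ) (hm : 2 ≤ m) (c1 c2 : ℝ → ℝ)
    (hc1 : ContDiff ℝ (⊤ : ℕ∞) c1) (hc2 : ContDiff ℝ (⊤ : ℕ∞) c2)
    (hlt : ∀ x, c1 x < c2 x)
    (F : ℝ × ℝ × (Fin (m - 1) → ℝ) → ℝ)
    (hF : ∀ p, F p = (p.1 - c1 p.2.1) * (c2 p.2.1 - p.1) - ∑ j, (p.2.2 j) ^ 2)
    (p : ℝ × ℝ × (Fin (m - 1) → ℝ))
    (hp : F p = 0) (hple : c1 p.2.1 ≤ p.1 ∧ p.1 ≤ c2 p.2.1) :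
    fderiv ℝ F p ≠ 0 := by
  obtain ⟨x1, x2, y⟩ := p
  have hFeq : F = fun q : ℝ × ℝ × (Fin (m - 1) → ℝ) =>
      (q.1 - c1 q.2.1) * (c2 q.2.1 - q.1) - ∑ j, (q.2.2 j) ^ 2 := funext hF
  have hd1 : Differentiable ℝ c1 := hc1.differentiable (by simp)
  have hd2 : Differentiable ℝ c2 := hc2.differentiable (by simp)
  have hFdiff : DifferentiableAt ℝ F (x1, x2, y) := by
    rw [hFeq]
    apply DifferentiableAt.sub
    · exact ((differentiableAt_fst.sub ((hd1 _).comp _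
        (differentiableAt_fst.comp _ differentiableAt_snd))).mul
        (((hd2 _).comp _ (differentiableAt_fst.comp _ differentiableAt_snd)).sub
        differentiableAt_fst))
    · exact DifferentiableAt.fun_sum fun j _ =>
        (((differentiableAt_pi.mp (differentiableAt_fun_id (x := y))) j).comp _
          (show DifferentiableAt ℝ (fun q : ℝ × ℝ × (Fin (m - 1) → ℝ) => q.2.2) (x1, x2, y) from
            differentiableAt_snd.snd)).fun_pow 2
  intro h0
  have hzero : HasFDerivAt F (0 : (ℝ × ℝ × (Fin (m - 1) → ℝ)) →L[ℝ] ℝ) (x1, x2, y) := by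
    have := hFdiff.hasFDerivAt
    rwa [h0] at this
  set S : ℝ := ∑ j, (y j) ^ 2 with hS
  by_cases hSz : S = 0
  · -- all y j = 0, so (x1 - c1 x2)(c2 x2 - x1) = 0
    have hprod : (x1 - c1 x2) * (c2 x2 - x1) = 0 := by
      have := hF (x1, x2, y)
      simp only [hp] at this
      linarith [this, hSz]
    -- curve in the x1 direction
    have hc : HasDerivAt (fun t : ℝ => ((x1 + t, x2, y) : ℝ × ℝ × (Fin (m - 1) → ℝ)))
        ((1, 0, 0) : ℝ × ℝ × (Fin (m - 1) → ℝ)) 0 :=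
      (((hasDerivAt_id (0:ℝ)).const_add x1)).prodMk
        ((hasDerivAt_const 0 x2).prodMk (hasDerivAt_const 0 y))
    have hcomp : HasDerivAt (fun t : ℝ => F (x1 + t, x2, y)) 0 0 := by
      have hzero' : HasFDerivAt F (0 : (ℝ × ℝ × (Fin (m - 1) → ℝ)) →L[ℝ] ℝ) (x1 + 0, x2, y) := by
        simpa using hzero
      have := hzero'.comp_hasDerivAt 0 hc
      exact this
    have hexp : HasDerivAt (fun t : ℝ => F (x1 + t, x2, y))
        (1 * (c2 x2 - (x1 + 0)) + (x1 + 0 - c1 x2) * -1) 0 := by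
      have hu : HasDerivAt (fun t : ℝ => x1 + t) 1 0 := (hasDerivAt_id 0).const_add x1
      have := ((hu.sub_const (c1 x2)).mul (hu.const_sub (c2 x2))).sub_const S
      simpa [hF, hS] using this
    have := hcomp.unique hexp
    have hne : (1 * (c2 x2 - (x1 + 0)) + (x1 + 0 - c1 x2) * -1) ≠ 0 := by
      rcases mul_eq_zero.mp hprod with h | h
      · have hx : x1 = c1 x2 := by linarith [sub_eq_zero.mp h]
        have := hlt x2
        simp [hx]; linarith
      · have hx : x1 = c2 x2 := by
          have := sub_eq_zero.mp h; linarith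
        have := hlt x2
        simp [hx]; linarith
    exact hne this.symm
  · -- direction y
    have hc : HasDerivAt (fun t : ℝ => ((x1, x2, fun i => y i + t * y i) : ℝ × ℝ × (Fin (m - 1) → ℝ)))
        ((0, 0, y) : ℝ × ℝ × (Fin (m - 1) → ℝ)) 0 :=
      (hasDerivAt_const 0 x1).prodMk ((hasDerivAt_const 0 x2).prodMk (by
        have : HasDerivAt (fun t : ℝ => y + t • y) ((1:ℝ) • y) 0 :=
          ((hasDerivAt_id (0:ℝ)).smul_const y).const_add y
        have e : (fun t : ℝ => y + t • y) = fun t i => y i + t * y i := by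
          ext t i; simp
        rw [e, one_smul] at this
        exact this))
    have hcomp : HasDerivAt (fun t : ℝ => F (x1, x2, fun i => y i + t * y i)) 0 0 := by
      have hzero' : HasFDerivAt F (0 : (ℝ × ℝ × (Fin (m - 1) → ℝ)) →L[ℝ] ℝ)
          (x1, x2, fun i => y i + 0 * y i) := by
        simpa using hzero
      have := hzero'.comp_hasDerivAt 0 hc
      exact this
    have hexp : HasDerivAt (fun t : ℝ => F (x1, x2, fun i => y i + t * y i))
        (-((2 : ℝ) * (1 + 0) ^ 1 * 1 * S)) 0 := by
      have h1 : HasDerivAt (fun t : ℝ => (1 : ℝ) + t) 1 0 := (hasDerivAt_id 0).const_add 1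
      have h2 := ((h1.fun_pow 2).mul_const S).const_sub ((x1 - c1 x2) * (c2 x2 - x1))
      have heq : (fun t : ℝ => (x1 - c1 x2) * (c2 x2 - x1) - (1 + t) ^ 2 * S)
          = fun t : ℝ => F (x1, x2, fun i => y i + t * y i) := by
        funext t
        simp only [hF, hS, Finset.mul_sum]
        congr 1
        apply Finset.sum_congr rfl
        intro i _
        ring
      rw [heq] at h2
      exact h2.congr_deriv (by norm_num)
    have huniq := hcomp.unique hexp
    exact hSz (by nlinarith [huniq])
end

section
/- Let c1, c2 : ℝ → ℝ be smooth with c1 < c2 everywhere, and let F(x1,x2,y) = (x1 - c1(x2))(c2(x2) - x1) - ‖y‖² with zero set X. At a point p = (x1, x2, y) ∈ X with c1(x2) < x1 < c2(x2), the partial derivative of F in some y_j direction is nonzero (equivalently y ≠ 0 forces ∂F/∂y_j ≠ 0 for some j), while at a point with x1 = c1(x2) or x1 = c2(x2), the partial derivative ∂F/∂x1 = c1(x2) + c2(x2) - 2x1 is nonzero. -/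
theorem stmt_3 (m : ℕ) (hm : 2 ≤ m) (c1 c2 : ℝ → ℝ)
    (hc1 : ContDiff ℝ (⊤ : ℕ∞) c1) (hc2 : ContDiff ℝ (⊤ : ℕ∞) c2)
    (hlt : ∀ x, c1 x < c2 x)
    (F : ℝ × ℝ × (Fin (m - 1) → ℝ) → ℝ)
    (hF : ∀ p, F p = (p.1 - c1 p.2.1) * (c2 p.2.1 - p.1) - ∑ j, (p.2.2 j) ^ 2)
    (x1 x2 : ℝ) (y : Fin (m - 1) → ℝ)
    (hzero : F (x1, x2, y) = 0) :
    (c1 x2 < x1 → x1 < c2 x2 →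
        ∃ j : Fin (m - 1),
          fderiv ℝ F (x1, x2, y) (0, 0, Pi.single j 1) ≠ 0) ∧
    ((x1 = c1 x2 ∨ x1 = c2 x2) →
        fderiv ℝ F (x1, x2, y) (1, 0, 0) = c1 x2 + c2 x2 - 2 * x1 ∧
        fderiv ℝ F (x1, x2, y) (1, 0, 0) ≠ 0) := by
  classical
  have hFe : F = fun q : ℝ × ℝ × (Fin (m - 1) → ℝ) =>
      (q.1 - c1 q.2.1) * (c2 q.2.1 - q.1) - ∑ j, (q.2.2 j) ^ 2 := funext hF
  set fstCLM : (ℝ × ℝ × (Fin (m - 1) → ℝ)) →L[ℝ] ℝ :=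
    ContinuousLinearMap.fst ℝ ℝ (ℝ × (Fin (m - 1) → ℝ)) with hfstCLM
  set uCLM : (ℝ × ℝ × (Fin (m - 1) → ℝ)) →L[ℝ] ℝ :=
    (ContinuousLinearMap.fst ℝ ℝ (Fin (m - 1) → ℝ)).comp
      (ContinuousLinearMap.snd ℝ ℝ (ℝ × (Fin (m - 1) → ℝ))) with huCLM
  have hu : HasFDerivAt (fun q : ℝ × ℝ × (Fin (m - 1) → ℝ) => q.2.1) uCLM (x1, x2, y) :=
    uCLM.hasFDerivAt
  have hc1d : HasDerivAt c1 (deriv c1 x2) x2 :=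
    ((hc1.differentiable (by simp)) x2).hasDerivAt
  have hc2d : HasDerivAt c2 (deriv c2 x2) x2 :=
    ((hc2.differentiable (by simp)) x2).hasDerivAt
  have hA : HasFDerivAt (fun q : ℝ × ℝ × (Fin (m - 1) → ℝ) => q.1 - c1 q.2.1)
      (fstCLM - (deriv c1 x2) • uCLM) (x1, x2, y) :=
    hasFDerivAt_fst.sub (hc1d.comp_hasFDerivAt (x1, x2, y) hu)
  have hB : HasFDerivAt (fun q : ℝ × ℝ × (Fin (m - 1) → ℝ) => c2 q.2.1 - q.1)
      ((deriv c2 x2) • uCLM - fstCLM) (x1, x2, y) :=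
    (hc2d.comp_hasFDerivAt (x1, x2, y) hu).sub hasFDerivAt_fst
  have hAB := hA.mul hB
  set projCLM : Fin (m - 1) → ((ℝ × ℝ × (Fin (m - 1) → ℝ)) →L[ℝ] ℝ) := fun j =>
    (ContinuousLinearMap.proj j).comp
      ((ContinuousLinearMap.snd ℝ ℝ (Fin (m - 1) → ℝ)).comp
        (ContinuousLinearMap.snd ℝ ℝ (ℝ × (Fin (m - 1) → ℝ)))) with hprojCLM
  have hS : HasFDerivAt (fun q : ℝ × ℝ × (Fin (m - 1) → ℝ) => ∑ j, (q.2.2 j) ^ 2)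
      (∑ j, (2 * y j) • projCLM j) (x1, x2, y) := by
    apply HasFDerivAt.fun_sum
    intro j _
    have hproj : HasFDerivAt (fun q : ℝ × ℝ × (Fin (m - 1) → ℝ) => q.2.2 j)
        (projCLM j) (x1, x2, y) := (projCLM j).hasFDerivAt
    have h2 := hproj.fun_mul hproj
    simpa [pow_two, two_mul, add_smul] using h2
  have hFd : HasFDerivAt F
      ((x1 - c1 x2) • ((deriv c2 x2) • uCLM - fstCLM) +
        (c2 x2 - x1) • (fstCLM - (deriv c1 x2) • uCLM) -
        ∑ j, (2 * y j) • projCLM j) (x1, x2, y) := by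
    rw [hFe]
    exact hAB.sub hS
  have hfd := hFd.fderiv
  constructor
  · intro h1 h2
    have hsum : ∑ j, (y j) ^ 2 = (x1 - c1 x2) * (c2 x2 - x1) := by
      have h := hF (x1, x2, y)
      rw [hzero] at h
      linarith [h]
    have hpos : 0 < ∑ j, (y j) ^ 2 := by
      rw [hsum]
      exact mul_pos (by linarith) (by linarith)
    obtain ⟨j, hj⟩ : ∃ j, y j ≠ 0 := by
      by_contra hall
      push_neg at hall
      simp [hall] at hpos
    refine ⟨j, ?_⟩
    rw [hfd]
    have hpr : ∀ i : Fin (m - 1),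
        projCLM i ((0, 0, Pi.single j 1) : ℝ × ℝ × (Fin (m - 1) → ℝ)) = (Pi.single j 1 : Fin (m - 1) → ℝ) i := by
      intro i; rfl
    have hfst : fstCLM ((0, 0, Pi.single j 1) : ℝ × ℝ × (Fin (m - 1) → ℝ)) = 0 := rfl
    have hucl : uCLM ((0, 0, Pi.single j 1) : ℝ × ℝ × (Fin (m - 1) → ℝ)) = 0 := rfl
    simp only [ContinuousLinearMap.sub_apply, ContinuousLinearMap.add_apply,
      ContinuousLinearMap.smul_apply, ContinuousLinearMap.sum_apply, hpr, hfst, hucl]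
    rw [Finset.sum_eq_single j]
    · simp [hj]
    · intro i _ hij
      simp [Pi.single_eq_of_ne hij]
    · simp
  · intro hcase
    have hfst : fstCLM ((1, 0, 0) : ℝ × ℝ × (Fin (m - 1) → ℝ)) = 1 := rfl
    have hucl : uCLM ((1, 0, 0) : ℝ × ℝ × (Fin (m - 1) → ℝ)) = 0 := rfl
    have hpr : ∀ i : Fin (m - 1),
        projCLM i ((1, 0, 0) : ℝ × ℝ × (Fin (m - 1) → ℝ)) = 0 := fun i => rfl
    have hval : fderiv ℝ F (x1, x2, y) (1, 0, 0) = c1 x2 + c2 x2 - 2 * x1 := by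
      rw [hfd]
      simp only [ContinuousLinearMap.sub_apply, ContinuousLinearMap.add_apply,
        ContinuousLinearMap.smul_apply, ContinuousLinearMap.sum_apply, hfst, hucl, hpr]
      simp
      ring
    refine ⟨hval, ?_⟩
    rw [hval]
    have hl := hlt x2
    rcases hcase with h | h <;> (intro hcontra; rw [h] at hcontra; linarith)
end

section
/- Let c1, c2 : ℝ → ℝ be continuous with c1 < c2 everywhere, and suppose c1(t) → q and c2(t) → q as t → −∞ for some real q, and c1(t) → q' and c2(t) → q' as t → +∞ for some real q'. Let X = {(x1,x2,y) ∈ ℝ^{m+1} : (x1 − c1(x2))(c2(x2) − x1) = ‖y‖²} and let f : X → ℝ be f(x1,x2,y) = x1. Then for every compact set K ⊆ ℝ \ {q, q'}, the preimage f⁻¹(K) is compact; i.e., the restriction of f to f⁻¹(ℝ \ {q, q'}) is a proper map. -/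
theorem stmt_9 (m : ℕ) (hm : 2 ≤ m) (c1 c2 : ℝ → ℝ)
    (hc1 : Continuous c1) (hc2 : Continuous c2)
    (hlt : ∀ x, c1 x < c2 x) (q q' : ℝ)
    (h1 : Filter.Tendsto c1 Filter.atBot (nhds q))
    (h2 : Filter.Tendsto c2 Filter.atBot (nhds q))
    (h3 : Filter.Tendsto c1 Filter.atTop (nhds q'))
    (h4 : Filter.Tendsto c2 Filter.atTop (nhds q'))
    (X : Set (ℝ × ℝ × (Fin (m - 1) → ℝ)))
    (hX : X = {p | (p.1 - c1 p.2.1) * (c2 p.2.1 - p.1) = ∑ j, (p.2.2 j) ^ 2})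
    (K : Set ℝ) (hK : IsCompact K) (hKq : K ⊆ {q, q'}ᶜ) :
    IsCompact {p ∈ X | p.1 ∈ K} := by
  rcases K.eq_empty_or_nonempty with rfl | hKne
  · convert isCompact_empty using 1
    ext p; simp
  -- closedness
  have hXc : IsClosed X := by
    rw [hX]
    exact isClosed_eq (by fun_prop) (by fun_prop)
  have hclosed : IsClosed {p ∈ X | p.1 ∈ K} :=
    hXc.inter (hK.isClosed.preimage continuous_fst)
  -- ε : distance from K to {q, q'}
  have hgcont : Continuous fun x : ℝ => min (dist x q) (dist x q') :=
    (continuous_id.dist continuous_const).min (continuous_id.dist continuous_const)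
  obtain ⟨x0, hx0K, hx0min⟩ := hK.exists_isMinOn hKne hgcont.continuousOn
  set ε := min (dist x0 q) (dist x0 q') with hεdef
  have hx0 : x0 ≠ q ∧ x0 ≠ q' := by
    have := hKq hx0K; simpa using this
  have hε : 0 < ε := by
    simp only [hεdef, lt_min_iff, dist_pos]
    exact hx0
  have hεK : ∀ x ∈ K, ε ≤ dist x q ∧ ε ≤ dist x q' := by
    intro x hx
    have := hx0min hx
    simp only [le_min_iff] at this
    exact this
  -- the ordering fact on X
  have horder : ∀ p ∈ X, c1 p.2.1 ≤ p.1 ∧ p.1 ≤ c2 p.2.1 := by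
    intro p hp
    rw [hX] at hp
    have hsum : (0:ℝ) ≤ ∑ j, (p.2.2 j) ^ 2 :=
      Finset.sum_nonneg fun j _ => sq_nonneg _
    have hprod : (0:ℝ) ≤ (p.1 - c1 p.2.1) * (c2 p.2.1 - p.1) := hp ▸ hsum
    have hl := hlt p.2.1
    constructor <;> nlinarith
  -- bounds at -∞ and +∞
  obtain ⟨A1, hA1⟩ := Filter.eventually_atBot.mp (h1.eventually (Metric.ball_mem_nhds q hε))
  obtain ⟨A2, hA2⟩ := Filter.eventually_atBot.mp (h2.eventually (Metric.ball_mem_nhds q hε))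
  obtain ⟨B1, hB1⟩ := Filter.eventually_atTop.mp (h3.eventually (Metric.ball_mem_nhds q' hε))
  obtain ⟨B2, hB2⟩ := Filter.eventually_atTop.mp (h4.eventually (Metric.ball_mem_nhds q' hε))
  set A := min A1 A2
  set B := max B1 B2
  have htmem : ∀ p ∈ X, p.1 ∈ K → p.2.1 ∈ Set.Icc A B := by
    intro p hp hpK
    obtain ⟨ho1, ho2⟩ := horder p hp
    constructor
    · by_contra h
      push_neg at h
      have h1' := hA1 p.2.1 (le_of_lt (lt_of_lt_of_le h (min_le_left _ _)))
      have h2' := hA2 p.2.1 (le_of_lt (lt_of_lt_of_le h (min_le_right _ _)))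
      rw [Real.dist_eq] at h1' h2'
      have hεx := (hεK p.1 hpK).1
      rw [Real.dist_eq] at hεx
      rcases abs_lt.mp h1' with ⟨ha, hb⟩
      rcases abs_lt.mp h2' with ⟨hc, hd⟩
      have : |p.1 - q| < ε := abs_lt.mpr ⟨by linarith, by linarith⟩
      linarith
    · by_contra h
      push_neg at h
      have h1' := hB1 p.2.1 (le_of_lt (lt_of_le_of_lt (le_max_left _ _) h))
      have h2' := hB2 p.2.1 (le_of_lt (lt_of_le_of_lt (le_max_right _ _) h))
      rw [Real.dist_eq] at h1' h2'
      have hεx := (hεK p.1 hpK).2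
      rw [Real.dist_eq] at hεx
      rcases abs_lt.mp h1' with ⟨ha, hb⟩
      rcases abs_lt.mp h2' with ⟨hc, hd⟩
      have : |p.1 - q'| < ε := abs_lt.mpr ⟨by linarith, by linarith⟩
      linarith
  -- bounds on c1, c2 on Icc A B and on K
  obtain ⟨C1, hC1⟩ := (isCompact_Icc (a := A) (b := B)).exists_bound_of_continuousOn hc1.continuousOn
  obtain ⟨C2, hC2⟩ := (isCompact_Icc (a := A) (b := B)).exists_bound_of_continuousOn hc2.continuousOn
  obtain ⟨C0, hC0⟩ := hK.exists_bound_of_continuousOn continuous_id.continuousOn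
  set C := max C1 C2
  set M := (C0 + C) * (C + C0) with hMdef
  -- bound on y
  have hy : ∀ p ∈ X, p.1 ∈ K → p.2.2 ∈ Metric.closedBall (0 : Fin (m-1) → ℝ) (Real.sqrt M) := by
    intro p hp hpK
    have ht := htmem p hp hpK
    have hb1 : |c1 p.2.1| ≤ C := le_trans (hC1 _ ht) (le_max_left _ _)
    have hb2 : |c2 p.2.1| ≤ C := le_trans (hC2 _ ht) (le_max_right _ _)
    have hb0 : |p.1| ≤ C0 := hC0 _ hpK
    rw [hX] at hp
    have hsumle : (∑ j, (p.2.2 j) ^ 2) ≤ M := by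
      rw [← hp, hMdef]
      rcases abs_le.mp hb1 with ⟨_, _⟩
      rcases abs_le.mp hb2 with ⟨_, _⟩
      rcases abs_le.mp hb0 with ⟨_, _⟩
      nlinarith
    simp only [Metric.mem_closedBall, dist_zero_right]
    rw [pi_norm_le_iff_of_nonneg (Real.sqrt_nonneg M)]
    intro j
    have hjle : (p.2.2 j) ^ 2 ≤ ∑ i, (p.2.2 i) ^ 2 :=
      Finset.single_le_sum (fun i _ => sq_nonneg (p.2.2 i)) (Finset.mem_univ j)
    have : (p.2.2 j) ^ 2 ≤ M := le_trans hjle hsumle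
    calc ‖p.2.2 j‖ = Real.sqrt ((p.2.2 j) ^ 2) := by
          rw [Real.sqrt_sq_eq_abs]; rfl
      _ ≤ Real.sqrt M := Real.sqrt_le_sqrt this
  -- conclude
  have hsub : {p ∈ X | p.1 ∈ K} ⊆
      K ×ˢ (Set.Icc A B ×ˢ Metric.closedBall (0 : Fin (m-1) → ℝ) (Real.sqrt M)) := by
    rintro p ⟨hp, hpK⟩
    exact ⟨hpK, htmem p hp hpK, hy p hp hpK⟩
  have hbdd : Bornology.IsBounded {p ∈ X | p.1 ∈ K} :=
    (hK.isBounded.prod ((Metric.isBounded_Icc A B).prod Metric.isBounded_closedBall)).subset hsub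
  exact Metric.isCompact_of_isClosed_isBounded hclosed hbdd
end

section
/- Let c1, c2 : ℝ → ℝ be continuous with c1 < c2 everywhere, and suppose that |c1(t)| → ∞ and |c2(t)| → ∞ as t → ±∞ in such a way that c1 and c2 both tend to +∞ (or both to −∞) at each infinity. Then the function f : X → ℝ, f(x1, x2, y) = x1, on X = {(x1,x2,y) ∈ ℝ^{m+1} : (x1 − c1(x2))(c2(x2) − x1) = ‖y‖²}, is a proper map: preimages of compact sets are compact. -/
theorem stmt_10 (m : ℕ) (hm : 2 ≤ m) (c1 c2 : ℝ → ℝ)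
    (hc1 : Continuous c1) (hc2 : Continuous c2)
    (hlt : ∀ x, c1 x < c2 x)
    (hbot : (Filter.Tendsto c1 Filter.atBot Filter.atTop ∧
             Filter.Tendsto c2 Filter.atBot Filter.atTop) ∨
            (Filter.Tendsto c1 Filter.atBot Filter.atBot ∧
             Filter.Tendsto c2 Filter.atBot Filter.atBot))
    (htop : (Filter.Tendsto c1 Filter.atTop Filter.atTop ∧
             Filter.Tendsto c2 Filter.atTop Filter.atTop) ∨
            (Filter.Tendsto c1 Filter.atTop Filter.atBot ∧
             Filter.Tendsto c2 Filter.atTop Filter.atBot))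
    (X : Set (ℝ × ℝ × (Fin (m - 1) → ℝ)))
    (hX : X = {p | (p.1 - c1 p.2.1) * (c2 p.2.1 - p.1) = ∑ j, (p.2.2 j) ^ 2})
    (K : Set ℝ) (hK : IsCompact K) :
    IsCompact {p ∈ X | p.1 ∈ K} := by
  -- K is bounded: get M ≥ 0 with K ⊆ Icc (-M) M
  obtain ⟨M0, hM0⟩ := hK.isBounded.subset_closedBall 0
  set M : ℝ := max M0 0 with hMdef
  have hM0le : (0:ℝ) ≤ M := le_max_right _ _
  have hKM : ∀ x ∈ K, |x| ≤ M := by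
    intro x hx
    have := hM0 hx
    simp [Metric.mem_closedBall, Real.dist_eq] at this
    exact le_trans this (le_max_left _ _)
  -- bound for x2 at +∞
  have htop' : ∃ a : ℝ, ∀ t ≥ a, M < c1 t ∨ c2 t < -M := by
    rcases htop with ⟨h1, _⟩ | ⟨_, h2⟩
    · obtain ⟨a, ha⟩ := Filter.eventually_atTop.mp (h1.eventually_gt_atTop M)
      exact ⟨a, fun t ht => Or.inl (ha t ht)⟩
    · obtain ⟨a, ha⟩ := Filter.eventually_atTop.mp (h2.eventually_lt_atBot (-M))
      exact ⟨a, fun t ht => Or.inr (ha t ht)⟩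
  have hbot' : ∃ b : ℝ, ∀ t ≤ b, M < c1 t ∨ c2 t < -M := by
    rcases hbot with ⟨h1, _⟩ | ⟨_, h2⟩
    · obtain ⟨b, hb⟩ := Filter.eventually_atBot.mp (h1.eventually_gt_atTop M)
      exact ⟨b, fun t ht => Or.inl (hb t ht)⟩
    · obtain ⟨b, hb⟩ := Filter.eventually_atBot.mp (h2.eventually_lt_atBot (-M))
      exact ⟨b, fun t ht => Or.inr (hb t ht)⟩
  obtain ⟨a, ha⟩ := htop'
  obtain ⟨b, hb⟩ := hbot'
  -- bound for c1, c2 on Icc b a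
  obtain ⟨C0, hC0⟩ := (isCompact_Icc (a := b) (b := a)).exists_bound_of_continuousOn
    (f := fun t => |c1 t| + |c2 t|) ((hc1.abs.add hc2.abs).continuousOn)
  set C : ℝ := max C0 0 with hCdef
  have hC0le : (0:ℝ) ≤ C := le_max_right _ _
  have hCb : ∀ t ∈ Set.Icc b a, |c1 t| ≤ C ∧ |c2 t| ≤ C := by
    intro t ht
    have := hC0 t ht
    rw [Real.norm_eq_abs] at this
    have h1 : |c1 t| + |c2 t| ≤ C0 := le_trans (le_abs_self _) this
    constructor <;> [skip; skip] <;>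
      · have := abs_nonneg (c1 t); have := abs_nonneg (c2 t)
        have hc : C0 ≤ C := le_max_left _ _
        linarith
  set D : ℝ := M + C with hDdef
  have hD : (0:ℝ) ≤ D := by positivity
  -- key pointwise bounds
  have hsub : {p ∈ X | p.1 ∈ K} ⊆
      Set.Icc (-M) M ×ˢ (Set.Icc b a ×ˢ Set.univ.pi fun _ : Fin (m-1) => Set.Icc (-D) D) := by
    rintro ⟨x1, x2, y⟩ ⟨hpX, hpK⟩
    rw [hX] at hpX
    simp only [Set.mem_setOf_eq] at hpX
    have hsum : (0:ℝ) ≤ ∑ j, (y j) ^ 2 :=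
      Finset.sum_nonneg fun j _ => sq_nonneg _
    have hx1M : |x1| ≤ M := hKM _ hpK
    have hx1M' : -M ≤ x1 ∧ x1 ≤ M := abs_le.mp hx1M
    have hltx := hlt x2
    have hprod : (0:ℝ) ≤ (x1 - c1 x2) * (c2 x2 - x1) := hpX ▸ hsum
    have h1 : c1 x2 ≤ x1 := by nlinarith
    have h2 : x1 ≤ c2 x2 := by nlinarith
    have hx2 : x2 ∈ Set.Icc b a := by
      constructor
      · by_contra h
        push_neg at h
        rcases hb x2 h.le with hc | hc
        · linarith [hx1M'.2]
        · linarith [hx1M'.1]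
      · by_contra h
        push_neg at h
        rcases ha x2 h.le with hc | hc
        · linarith [hx1M'.2]
        · linarith [hx1M'.1]
    have hcb := hCb x2 hx2
    have hc1b := abs_le.mp hcb.1
    have hc2b := abs_le.mp hcb.2
    have hprodD : (x1 - c1 x2) * (c2 x2 - x1) ≤ D ^ 2 := by
      simp only [hDdef]
      nlinarith [hx1M'.1, hx1M'.2, hc1b.1, hc1b.2, hc2b.1, hc2b.2]
    refine ⟨hx1M', hx2, ?_⟩
    intro j _
    have hj : (y j) ^ 2 ≤ ∑ i, (y i) ^ 2 :=
      Finset.single_le_sum (fun i _ => sq_nonneg (y i)) (Finset.mem_univ j)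
    have hj2 : (y j) ^ 2 ≤ D ^ 2 := by rw [← hpX] at hj; linarith
    constructor
    · nlinarith [sq_nonneg (y j + D)]
    · nlinarith [sq_nonneg (y j - D)]
  -- closedness
  have hclosed : IsClosed {p ∈ X | p.1 ∈ K} := by
    have hXc : IsClosed X := by
      rw [hX]
      exact isClosed_eq (by fun_prop) (by fun_prop)
    exact hXc.inter (hK.isClosed.preimage continuous_fst)
  -- compact superset
  have hcomp : IsCompact
      (Set.Icc (-M) M ×ˢ (Set.Icc b a ×ˢ Set.univ.pi fun _ : Fin (m-1) => Set.Icc (-D) D)) :=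
    isCompact_Icc.prod (isCompact_Icc.prod (isCompact_univ_pi fun _ => isCompact_Icc))
  exact hcomp.of_isClosed_subset hclosed hsub
end

section
/- Let c1, c2 : ℝ → ℝ be smooth with c1 < c2 everywhere, let X = {(x1,x2,y) : (x1−c1(x2))(c2(x2)−x1) = ‖y‖²} ⊆ ℝ^{m+1}, viewed as a smooth submanifold, and let f : X → ℝ be the first-coordinate projection. Then a point p = (x1, x2, y) ∈ X is a critical point of f if and only if y = 0, x1 = c_i(x2) for i = 1 or 2, and c_i'(x2) = 0. -/
theorem stmt_11 (m : ℕ) (hm : 2 ≤ m) (c1 c2 : ℝ → ℝ)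
    (hc1 : ContDiff ℝ (⊤ : ℕ∞) c1) (hc2 : ContDiff ℝ (⊤ : ℕ∞) c2)
    (hlt : ∀ x, c1 x < c2 x)
    (F : ℝ × ℝ × (Fin (m - 1) → ℝ) → ℝ)
    (hF : ∀ p, F p = (p.1 - c1 p.2.1) * (c2 p.2.1 - p.1) - ∑ j, (p.2.2 j) ^ 2)
    (x1 x2 : ℝ) (y : Fin (m - 1) → ℝ)
    (hzero : F (x1, x2, y) = 0) :
    (∀ v : ℝ × ℝ × (Fin (m - 1) → ℝ),
        fderiv ℝ F (x1, x2, y) v = 0 → v.1 = 0) ↔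
      (y = 0 ∧ ((x1 = c1 x2 ∧ deriv c1 x2 = 0) ∨
                (x1 = c2 x2 ∧ deriv c2 x2 = 0))) := by
  have key : ∀ v : ℝ × ℝ × (Fin (m-1) → ℝ), fderiv ℝ F (x1, x2, y) v =
      (c1 x2 + c2 x2 - 2 * x1) * v.1
      + (-(deriv c1 x2) * (c2 x2 - x1) + (deriv c2 x2) * (x1 - c1 x2)) * v.2.1
      - ∑ j, 2 * y j * v.2.2 j := by
    have hFeq : F = fun p => (p.1 - c1 p.2.1) * (c2 p.2.1 - p.1) - ∑ j, (p.2.2 j) ^ 2 :=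
      funext hF
    set L2 := (ContinuousLinearMap.fst ℝ ℝ (Fin (m-1) → ℝ)).comp
          (ContinuousLinearMap.snd ℝ ℝ (ℝ × (Fin (m-1) → ℝ))) with hL2
    have h1 : HasFDerivAt (fun p : ℝ × ℝ × (Fin (m-1) → ℝ) => p.1)
        (ContinuousLinearMap.fst ℝ ℝ (ℝ × (Fin (m-1) → ℝ))) (x1, x2, y) := hasFDerivAt_fst
    have h2 : HasFDerivAt (fun p : ℝ × ℝ × (Fin (m-1) → ℝ) => p.2.1) L2 (x1, x2, y) :=
      hasFDerivAt_fst.comp _ hasFDerivAt_snd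
    have hc1comp : HasFDerivAt (fun p : ℝ × ℝ × (Fin (m-1) → ℝ) => c1 p.2.1)
        ((deriv c1 x2) • L2) (x1, x2, y) :=
      ((hc1.differentiable (by simp)) x2).hasDerivAt.comp_hasFDerivAt _ h2
    have hc2comp : HasFDerivAt (fun p : ℝ × ℝ × (Fin (m-1) → ℝ) => c2 p.2.1)
        ((deriv c2 x2) • L2) (x1, x2, y) :=
      ((hc2.differentiable (by simp)) x2).hasDerivAt.comp_hasFDerivAt _ h2
    have hyj : ∀ j : Fin (m-1), HasFDerivAt (fun p : ℝ × ℝ × (Fin (m-1) → ℝ) => p.2.2 j)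
        ((ContinuousLinearMap.proj j).comp
          ((ContinuousLinearMap.snd ℝ ℝ (Fin (m-1) → ℝ)).comp
            (ContinuousLinearMap.snd ℝ ℝ (ℝ × (Fin (m-1) → ℝ))))) (x1, x2, y) :=
      fun j => ((ContinuousLinearMap.proj j).comp
          ((ContinuousLinearMap.snd ℝ ℝ (Fin (m-1) → ℝ)).comp
            (ContinuousLinearMap.snd ℝ ℝ (ℝ × (Fin (m-1) → ℝ))))).hasFDerivAt
    have hprod := (h1.sub hc1comp).mul (hc2comp.sub h1)
    have hsum := HasFDerivAt.sum (fun j (_ : j ∈ Finset.univ) =>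
      (hasDerivAt_pow 2 (y j)).comp_hasFDerivAt ((x1,x2,y) : ℝ × ℝ × (Fin (m-1) → ℝ)) (hyj j))
    have hD := hprod.sub hsum
    replace hD := hD.congr_of_eventuallyEq (f₁ := fun p : ℝ × ℝ × (Fin (m-1) → ℝ) => (p.1 - c1 p.2.1) * (c2 p.2.1 - p.1) - ∑ j, (p.2.2 j) ^ 2) (Filter.Eventually.of_forall fun p => by simp [Finset.sum_apply])
    rw [← hFeq] at hD
    intro v
    rw [hD.fderiv]
    simp [L2, ContinuousLinearMap.sum_apply, Finset.mul_sum]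
    ring
  set A := c1 x2 + c2 x2 - 2 * x1 with hA
  set B := -(deriv c1 x2) * (c2 x2 - x1) + (deriv c2 x2) * (x1 - c1 x2) with hB
  have hS : (x1 - c1 x2) * (c2 x2 - x1) = ∑ j, y j ^ 2 := by
    have := hF (x1, x2, y)
    rw [hzero] at this
    linarith [this]
  constructor
  · intro H
    -- first, y = 0
    have hy : y = 0 := by
      by_contra hy0
      obtain ⟨j, hj⟩ : ∃ j, y j ≠ 0 := Function.ne_iff.1 hy0
      have hSpos : 0 < ∑ j, y j ^ 2 :=
        Finset.sum_pos' (fun i _ => sq_nonneg _) ⟨j, Finset.mem_univ j, by positivity⟩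
      have hSne : (∑ j, y j ^ 2) ≠ 0 := ne_of_gt hSpos
      have hsum2 : ∀ k : ℝ, ∑ j, 2 * y j * (k * y j) = 2 * k * ∑ j, y j ^ 2 := by
        intro k
        rw [Finset.mul_sum]
        exact Finset.sum_congr rfl fun i _ => by ring
      have hev : fderiv ℝ F (x1, x2, y)
          (1, 0, fun i => A / (2 * ∑ j, y j ^ 2) * y i) = 0 := by
        rw [key, hsum2]
        field_simp
        ring
      have := H _ hev
      norm_num at this
    refine ⟨hy, ?_⟩
    subst hy
    simp only [Pi.zero_apply, ne_eq, OfNat.ofNat_ne_zero, not_false_eq_true, zero_pow,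
      Finset.sum_const_zero] at hS
    have hBzero : B = 0 := by
      have hev : fderiv ℝ F (x1, x2, 0) (B, -A, 0) = 0 := by
        rw [key]
        simp only [Pi.zero_apply, mul_zero, zero_mul, Finset.sum_const_zero, sub_zero]
        ring
      exact H _ hev
    rcases mul_eq_zero.1 hS with h | h
    · left
      have hx : x1 = c1 x2 := by linarith
      refine ⟨hx, ?_⟩
      have hd : deriv c1 x2 * (c2 x2 - c1 x2) = 0 := by
        rw [hB, hx] at hBzero; linarith
      rcases mul_eq_zero.1 hd with h' | h'
      · exact h'
      · have := hlt x2; linarith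
    · right
      have hx : x1 = c2 x2 := by linarith
      refine ⟨hx, ?_⟩
      have hd : deriv c2 x2 * (c2 x2 - c1 x2) = 0 := by
        rw [hB, hx] at hBzero; linarith
      rcases mul_eq_zero.1 hd with h' | h'
      · exact h'
      · have := hlt x2; linarith
  · rintro ⟨rfl, hcase⟩
    intro v hv
    rw [key] at hv
    simp only [Pi.zero_apply, mul_zero, zero_mul, Finset.sum_const_zero, sub_zero] at hv
    have hAne : A ≠ 0 := by
      rcases hcase with ⟨hx, _⟩ | ⟨hx, _⟩ <;>
        (have := hlt x2; rw [hA, hx]; intro hcon; linarith)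
    have hB0 : B = 0 := by
      rcases hcase with ⟨hx, hd⟩ | ⟨hx, hd⟩ <;> rw [hB, hd, hx] <;> ring
    rw [hB0] at hv
    have : A * v.1 = 0 := by linarith
    rcases mul_eq_zero.1 this with h | h
    · exact absurd h hAne
    · exact h
end

section
/- Let c1, c2 : ℝ → ℝ be smooth with c1 < c2 everywhere and let π : X → ℝ², π(x1,x2,y) = (x1,x2), where X = {(x1,x2,y) : (x1−c1(x2))(c2(x2)−x1) = ‖y‖²} ⊆ ℝ^{m+1} is viewed as a smooth m-dimensional submanifold. Then the singular set of π (points where the differential of π|_X has rank < 2) is exactly {(x1, x2, 0) : x1 = c1(x2) or x1 = c2(x2)}. -/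
set_option maxHeartbeats 1000000 in
theorem stmt_12 (m : ℕ) (hm : 2 ≤ m) (c1 c2 : ℝ → ℝ)
    (hc1 : ContDiff ℝ (⊤ : ℕ∞) c1) (hc2 : ContDiff ℝ (⊤ : ℕ∞) c2)
    (hlt : ∀ x, c1 x < c2 x)
    (F : ℝ × ℝ × (Fin (m - 1) → ℝ) → ℝ)
    (hF : ∀ p, F p = (p.1 - c1 p.2.1) * (c2 p.2.1 - p.1) - ∑ j, (p.2.2 j) ^ 2)
    (x1 x2 : ℝ) (y : Fin (m - 1) → ℝ)
    (hzero : F (x1, x2, y) = 0) :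
    (¬ ∀ w : ℝ × ℝ, ∃ v : ℝ × ℝ × (Fin (m - 1) → ℝ),
        fderiv ℝ F (x1, x2, y) v = 0 ∧ (v.1, v.2.1) = w) ↔
      (y = 0 ∧ (x1 = c1 x2 ∨ x1 = c2 x2)) := by
  classical
  set d1 := deriv c1 x2 with hd1def
  set d2 := deriv c2 x2 with hd2def
  set P1 : (ℝ × ℝ × (Fin (m - 1) → ℝ)) →L[ℝ] ℝ :=
      ContinuousLinearMap.fst ℝ ℝ (ℝ × (Fin (m - 1) → ℝ)) with hP1
  set P2 : (ℝ × ℝ × (Fin (m - 1) → ℝ)) →L[ℝ] ℝ :=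
      (ContinuousLinearMap.fst ℝ ℝ (Fin (m - 1) → ℝ)).comp
        (ContinuousLinearMap.snd ℝ ℝ (ℝ × (Fin (m - 1) → ℝ))) with hP2
  set P3 : Fin (m - 1) → ((ℝ × ℝ × (Fin (m - 1) → ℝ)) →L[ℝ] ℝ) := fun j =>
      (ContinuousLinearMap.proj j).comp
        ((ContinuousLinearMap.snd ℝ ℝ (Fin (m - 1) → ℝ)).comp
          (ContinuousLinearMap.snd ℝ ℝ (ℝ × (Fin (m - 1) → ℝ)))) with hP3
  have h1 : HasFDerivAt (fun q : ℝ × ℝ × (Fin (m - 1) → ℝ) => q.1) P1 (x1, x2, y) :=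
    P1.hasFDerivAt
  have h2 : HasFDerivAt (fun q : ℝ × ℝ × (Fin (m - 1) → ℝ) => q.2.1) P2 (x1, x2, y) :=
    P2.hasFDerivAt
  have h3 : ∀ j, HasFDerivAt (fun q : ℝ × ℝ × (Fin (m - 1) → ℝ) => q.2.2 j) (P3 j) (x1, x2, y) :=
    fun j => (P3 j).hasFDerivAt
  have hd1 : HasDerivAt c1 d1 x2 := ((hc1.differentiable (by simp)) x2).hasDerivAt
  have hd2 : HasDerivAt c2 d2 x2 := ((hc2.differentiable (by simp)) x2).hasDerivAt
  have hu : HasFDerivAt (fun q : ℝ × ℝ × (Fin (m - 1) → ℝ) => q.1 - c1 q.2.1)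
      (P1 - d1 • P2) (x1, x2, y) :=
    h1.sub (hd1.comp_hasFDerivAt _ h2)
  have hv : HasFDerivAt (fun q : ℝ × ℝ × (Fin (m - 1) → ℝ) => c2 q.2.1 - q.1)
      (d2 • P2 - P1) (x1, x2, y) :=
    (hd2.comp_hasFDerivAt _ h2).sub h1
  have hsq : ∀ j, HasFDerivAt (fun q : ℝ × ℝ × (Fin (m - 1) → ℝ) => (q.2.2 j) ^ 2)
      ((y j) • P3 j + (y j) • P3 j) (x1, x2, y) := by
    intro j
    have := (h3 j).mul (h3 j)
    simpa [pow_two, Pi.mul_def] using this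
  have hsum : HasFDerivAt (fun q : ℝ × ℝ × (Fin (m - 1) → ℝ) => ∑ j, (q.2.2 j) ^ 2)
      (∑ j, ((y j) • P3 j + (y j) • P3 j)) (x1, x2, y) :=
    HasFDerivAt.fun_sum (fun j _ => hsq j)
  set D : (ℝ × ℝ × (Fin (m - 1) → ℝ)) →L[ℝ] ℝ :=
    ((x1 - c1 x2) • (d2 • P2 - P1) + (c2 x2 - x1) • (P1 - d1 • P2))
      - ∑ j, ((y j) • P3 j + (y j) • P3 j) with hD
  have hFd : HasFDerivAt F D (x1, x2, y) := by
    have hfun : F = fun q : ℝ × ℝ × (Fin (m - 1) → ℝ) =>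
        (q.1 - c1 q.2.1) * (c2 q.2.1 - q.1) - ∑ j, (q.2.2 j) ^ 2 := funext hF
    rw [hfun]
    simpa [Pi.mul_def, Pi.sub_def] using (hu.mul hv).sub hsum
  have hfd : fderiv ℝ F (x1, x2, y) = D := hFd.fderiv
  have hDapp : ∀ v : ℝ × ℝ × (Fin (m - 1) → ℝ), D v =
      (x1 - c1 x2) * (d2 * v.2.1 - v.1) + (c2 x2 - x1) * (v.1 - d1 * v.2.1)
        - ∑ j, 2 * y j * v.2.2 j := by
    intro v
    have hsc : ∑ j, 2 * y j * v.2.2 j = ∑ j, (y j * v.2.2 j + y j * v.2.2 j) :=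
      Finset.sum_congr rfl (fun j _ => by ring)
    rw [hsc]
    simp [hD, hP1, hP2, hP3, ContinuousLinearMap.sum_apply, smul_eq_mul]
  constructor
  · intro hns
    have hy : y = 0 := by
      by_contra hy
      apply hns
      obtain ⟨j0, hj0⟩ : ∃ j, y j ≠ 0 := by
        by_contra h
        push_neg at h
        exact hy (funext h)
      intro w
      set t : ℝ := ((x1 - c1 x2) * (d2 * w.2 - w.1) + (c2 x2 - x1) * (w.1 - d1 * w.2))
        / (2 * y j0) with ht
      refine ⟨(w.1, w.2, Pi.single j0 t), ?_, rfl⟩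
      rw [hfd, hDapp]
      have hsum0 : ∑ j, 2 * y j * (Pi.single j0 t : Fin (m - 1) → ℝ) j = 2 * y j0 * t := by
        rw [Finset.sum_eq_single j0]
        · simp
        · intro b _ hb; simp [Pi.single_apply, hb]
        · simp
      simp only [hsum0]
      rw [ht]
      field_simp
      ring
    refine ⟨hy, ?_⟩
    have h0 : (x1 - c1 x2) * (c2 x2 - x1) = 0 := by
      have h := (hF (x1, x2, y)).symm.trans hzero
      simpa [hy] using h
    rcases mul_eq_zero.1 h0 with h | h
    · left; exact sub_eq_zero.mp h
    · right; exact (sub_eq_zero.mp h).symm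
  · rintro ⟨hy, hx⟩ h
    obtain ⟨v, hv0, hv1⟩ := h (1, 0)
    have hv11 : v.1 = 1 := congrArg Prod.fst hv1
    have hv21 : v.2.1 = 0 := congrArg Prod.snd hv1
    rw [hfd, hDapp, hv11, hv21, hy] at hv0
    simp only [Pi.zero_apply, mul_zero, zero_mul, Finset.sum_const_zero, mul_one,
      one_mul, sub_zero, zero_sub] at hv0
    rcases hx with h | h <;> subst h <;> ring_nf at hv0 <;> linarith [hlt x2]
end
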